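/- Let C be a hyperelliptic curve of genus g ≥ 3 with hyperelliptic divisor class H, and x ∈ Pic^{g−2}(C). If p, q, r, s ∈ C satisfy x^2 = K(−p−q−r+s), then the divisor D = p + q + r + τ(s), where τ is the hyperelliptic involution, satisfies K x^{-2} = O(D − H); consequently h^0(K^{-1}x^2(D)) = deg D − 2 = 2, i.e. the span of D in P H^1(C, K^{-1}x^2) is a line, so the trisecant line through p, q, r is in fact quadrisecant (it also passes through τ(s)). -/
import Mathlib



structure AbstractCurve where
  Point : Type
  Pic : Type
  [instPic : AddCommGroup Pic]
  g : ℕ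
  K : Pic
  deg : Pic →+ ℤ
  h0 : Pic → ℕ
  pt : Point → Pic
  deg_pt : ∀ p, deg (pt p) = 1
  deg_K : deg K = 2 * g - 2
  h0_neg : ∀ L, deg L < 0 → h0 L = 0
  riemannRoch : ∀ L, (h0 L : ℤ) - h0 (K - L) = deg L + 1 - g

attribute [instance] AbstractCurve.instPic

/-- `h1 L = h0(K - L)` (Serre duality). -/
def AbstractCurve.h1 (C : AbstractCurve) (L : C.Pic) : ℕ := C.h0 (C.K - L)

/-- The divisor class of an effective divisor, given as a multiset of points. -/
def AbstractCurve.div (C : AbstractCurve) (D : Multiset C.Point) : C.Pic :=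
  (D.map C.pt).sum

/-- The linear system `|L|` is base-point-free. -/
def AbstractCurve.bpf (C : AbstractCurve) (L : C.Pic) : Prop :=
  ∀ p : C.Point, C.h0 (L - C.pt p) < C.h0 L

structure RankTwoBundle (C : AbstractCurve) where
  det : C.Pic
  /-- `h0t L` is `h^0(E ⊗ L)`. -/
  h0t : C.Pic → ℕ
  /-- `sub L` says that `L` is a line subbundle of `E`. -/
  sub : C.Pic → Prop
  /-- `gr L` says that `E` is S-equivalent to `L ⊕ (det E - L)`. -/
  gr : C.Pic → Prop

def RankTwoBundle.h0 {C : AbstractCurve} (E : RankTwoBundle C) : ℕ := E.h0t 0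

def RankTwoBundle.Semistable {C : AbstractCurve} (E : RankTwoBundle C) : Prop :=
  ∀ L : C.Pic, E.sub L → 2 * C.deg L ≤ C.deg E.det

def RankTwoBundle.Stable {C : AbstractCurve} (E : RankTwoBundle C) : Prop :=
  ∀ L : C.Pic, E.sub L → 2 * C.deg L < C.deg E.det

/-- Let `C` be hyperelliptic of genus `g ≥ 3` with involution `τ` and
hyperelliptic class `H = O(s + τ(s))`, and `x ∈ Pic^{g−2}(C)`.  If
`x² = K(−p−q−r+s)`, then `D = p + q + r + τ(s)` satisfies `Kx⁻² = O(D − H)`;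
consequently `h^0(K⁻¹x²(D)) = deg D − 2 = 2`, i.e. the span of `D` in
`P H^1(K⁻¹x²)` is a line (`h^0(K²x⁻²(−D)) = g − 1`): the trisecant through
`p, q, r` is in fact quadrisecant, also passing through `τ(s)`. -/
theorem statement15 (C : AbstractCurve) (hg : 3 ≤ C.g)
    (τ : C.Point → C.Point)                              -- hyperelliptic involution
    (H : C.Pic) (hdH : C.deg H = 2) (hh0H : C.h0 H = 2)  -- hyperelliptic class
    (hHs : ∀ s : C.Point, C.pt s + C.pt (τ s) = H)
    (x : C.Pic) (hdx : C.deg x = (C.g : ℤ) - 2)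
    (p q r s : C.Point)
    (hx : 2 • x = C.K - C.pt p - C.pt q - C.pt r + C.pt s) :
    C.K - 2 • x = (C.pt p + C.pt q + C.pt r + C.pt (τ s)) - H ∧
    C.h0 (2 • x - C.K + (C.pt p + C.pt q + C.pt r + C.pt (τ s))) = 2 ∧
    C.h0 (C.K + C.K - 2 • x - (C.pt p + C.pt q + C.pt r + C.pt (τ s))) = C.g - 1 := by
  have hs := hHs s
  have h1 : C.K - 2 • x = (C.pt p + C.pt q + C.pt r + C.pt (τ s)) - H := by
    rw [hx, ← hs]; abel
  refine ⟨h1, ?_, ?_⟩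
  · have : 2 • x - C.K + (C.pt p + C.pt q + C.pt r + C.pt (τ s)) = H := by
      rw [hx, ← hs]; abel
    rw [this, hh0H]
  · have h2 : C.K + C.K - 2 • x - (C.pt p + C.pt q + C.pt r + C.pt (τ s)) = C.K - H := by
      rw [hx, ← hs]; abel
    rw [h2]
    have := C.riemannRoch H
    rw [hh0H, hdH] at this
    have hg' : (3 : ℤ) ≤ C.g := by exact_mod_cast hg
    omega
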